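/- The automaton generating the lamplighter group (ψ(a)=(a,b), ψ(b)=(b,a)σ over A={0,1}) is not contracting: the element a has infinite order in ⟨Π⟩, and the section (iterated transition) of aⁿ at the vertex 0^k equals a^n-related elements whose word lengths do not remain bounded; concretely, τ(0, a) = a, so a is a state of itself at vertex 0 for all iterates, while a has infinite order, hence no finite set N satisfies the contraction property for all powers of a. -/

import Mathlib

/-- The transformation of `A*` induced by an automaton at state `q`. -/
def act {A Q : Type*} (σ : A → Q → A) (τ : A → Q → Q) : Q → List A → List A
  | _, [] => []
  | q, a :: w => σ a q :: act σ τ (τ a q) w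

/-- The section of a tree map `g` at the word `w`. -/
def sectionFn {A : Type*} (g : List A → List A) (w : List A) : List A → List A :=
  fun v => (g (w ++ v)).drop w.length

/-- Output function of the lamplighter automaton (`false` = `a`, `true` = `b`). -/
def llOut : Bool → Bool → Bool := fun x q => if q then !x else x

/-- Transition function of the lamplighter automaton: `ψ(a)=(a,b)`, `ψ(b)=(b,a)σ`. -/
def llTrans : Bool → Bool → Bool := fun x q => if q then !x else x


/-!
The state `a` of the lamplighter automaton maps a word to its sequence of prefix sums mod 2,
i.e. it acts on `𝔽₂[[t]]` as multiplication by `(1 + t)⁻¹`. Since `a` fixes the letter `0` and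
stays in state `a` there, every power `aᵏ` is its own section at `0ⁿ`, so a nucleus would have
to contain all powers of `a`. These are pairwise distinct: multiplication by `1 + t` is a right
inverse of `a`, and `(1 + t)ᵈ` has coefficient `1` at `tᵈ`, so `(1 + t)ᵈ ≠ 1` for `d ≠ 0`.
-/

open Function List

section Automaton

variable {A Q : Type*} (σ : A → Q → A) (τ : A → Q → Q)

theorem length_act (q : Q) (w : List A) : (act σ τ q w).length = w.length := by
  induction w generalizing q with
  | nil => rfl
  | cons x w ih => simp [act, ih]

theorem length_iterate_act (q : Q) (d : ℕ) (w : List A) :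
    ((act σ τ q)^[d] w).length = w.length := by
  induction d with
  | zero => rfl
  | succ d ih => rw [iterate_succ_apply', length_act, ih]

variable {σ τ} in
theorem commute_replicate_append_act {x : A} {q : Q} (hσ : σ x q = x) (hτ : τ x q = q)
    (n : ℕ) : Function.Commute (replicate n x ++ ·) (act σ τ q) := by
  intro v
  induction n with
  | zero => rfl
  | succ n ih => simp [replicate_succ, act, hσ, hτ, ih]

end Automaton

theorem sectionFn_eq_of_commute {A : Type*} {g : List A → List A} {w : List A}
    (h : Function.Commute (w ++ ·) g) : sectionFn g w = g := by
  funext v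
  simp [sectionFn, ← h.eq v]

theorem iterate_eq_id_of_leftInverse {α : Type*} {f g : α → α} (hfg : LeftInverse f g)
    {m d : ℕ} (h : f^[m] = f^[m + d]) : g^[d] = id := by
  funext x
  calc g^[d] x = f^[m] (g^[m] (g^[d] x)) := ((hfg.iterate m) _).symm
    _ = f^[m] (g^[m + d] x) := by rw [iterate_add_apply]
    _ = f^[m + d] (g^[m + d] x) := by rw [h]
    _ = x := (hfg.iterate (m + d)) x

/-- Multiplication by `1 + t` on truncated power series over `𝔽₂`, with carry state `q`. -/
abbrev mulOnePlusT : Bool → List Bool → List Bool :=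
  act (fun x q => xor x q) (fun x _ => x)

theorem act_lamplighter_mulOnePlusT (q : Bool) (w : List Bool) :
    act llOut llTrans q (mulOnePlusT q w) = w := by
  induction w generalizing q with
  | nil => rfl
  | cons x w ih => cases x <;> cases q <;> simp [act, llOut, llTrans, ih]

theorem getD_mulOnePlusT_zero (w : List Bool) :
    (mulOnePlusT false w).getD 0 false = w.getD 0 false := by
  cases w <;> simp [act]

theorem getD_mulOnePlusT_succ (q : Bool) (w : List Bool) {j : ℕ} (hj : j + 1 < w.length) :
    (mulOnePlusT q w).getD (j + 1) false = xor (w.getD (j + 1) false) (w.getD j false) := by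
  induction w generalizing q j with
  | nil => simp at hj
  | cons x w ih =>
    rcases j with _ | j
    · cases w with
      | nil => simp at hj
      | cons y w => simp [act]
    · simp only [length_cons, add_lt_add_iff_right] at hj
      simpa [act] using ih x hj

theorem getD_iterate_mulOnePlusT {d L : ℕ} (hd : d ≤ L) (j : ℕ) :
    ((mulOnePlusT false)^[d] (true :: replicate L false)).getD j false = (d.choose j).bodd := by
  induction d generalizing j with
  | zero => cases j <;> simp [getD_eq_getElem?_getD]
  | succ d ih =>
    have hw := length_iterate_act (fun x q => xor x q) (fun x _ => x) false d
      (true :: replicate L false)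
    simp only [length_cons, length_replicate] at hw
    rw [iterate_succ_apply']
    rcases j with _ | j
    · rw [getD_mulOnePlusT_zero, ih (by omega)]
      simp
    · by_cases hj : j + 1 < L + 1
      · rw [getD_mulOnePlusT_succ _ _ (hw ▸ hj), ih (by omega), ih (by omega), Nat.choose_succ_succ',
          Nat.bodd_add, Bool.xor_comm]
      · rw [getD_eq_default _ _ (by rw [length_act, hw]; omega),
          Nat.choose_eq_zero_of_lt (by omega : d + 1 < j + 1)]
        rfl

theorem iterate_mulOnePlusT_ne_id {d : ℕ} (hd : d ≠ 0) : (mulOnePlusT false)^[d] ≠ id := by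
  intro hid
  have key := congrArg (getD · d false) (congrFun hid (true :: replicate d false))
  simp only [id] at key
  rw [getD_iterate_mulOnePlusT le_rfl] at key
  obtain ⟨d, rfl⟩ := Nat.exists_eq_succ_of_ne_zero hd
  simp [getD_eq_getElem?_getD] at key

theorem injective_iterate_lamplighter_a :
    Injective fun n : ℕ => (act llOut llTrans false)^[n] := by
  intro m n h
  by_contra hmn
  wlog hlt : m < n generalizing m n
  · exact this h.symm (Ne.symm hmn) (by omega)
  obtain ⟨d, rfl⟩ := Nat.exists_eq_add_of_lt hlt
  exact iterate_mulOnePlusT_ne_id d.succ_ne_zero <|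
    iterate_eq_id_of_leftInverse (act_lamplighter_mulOnePlusT false) (by simpa [add_assoc] using h)

theorem lamplighter_not_contracting :
    Function.Injective (fun n : ℕ => (act llOut llTrans false)^[n]) ∧
      ¬ ∃ N : Set (List Bool → List Bool), N.Finite ∧
          ∀ k : ℕ, ∃ n : ℕ, ∀ w : List Bool, w.length = n →
            sectionFn ((act llOut llTrans false)^[k]) w ∈ N := by
  refine ⟨injective_iterate_lamplighter_a, ?_⟩
  rintro ⟨N, hN, hcontr⟩
  have hsection (k n : ℕ) :
      sectionFn ((act llOut llTrans false)^[k]) (replicate n false) =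
        (act llOut llTrans false)^[k] :=
    sectionFn_eq_of_commute
      ((commute_replicate_append_act (σ := llOut) (τ := llTrans) rfl rfl n).iterate_right k)
  refine Set.infinite_of_injective_forall_mem injective_iterate_lamplighter_a (fun k => ?_) hN
  obtain ⟨n, hn⟩ := hcontr k
  simpa [hsection] using hn (replicate n false) length_replicate
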